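/- For a network with general bilinear layers F_k(x,Z_k) = σ_k(C_k(F_{k-1}, W_k) + ι_k(b_k)) and a differentiable loss ℓ, the Fréchet-Riesz gradient with respect to W_k is D_{W_k}ℓ(y,F_n(x,Z_n)) = S_k* ∘ T_{k+1}* ∘ ⋯ ∘ T_n*(L(y,F_n)), where T_j(h) = D_j ⊙ C_j(h, W_j), S_k(H) = D_k ⊙ C_k(F_{k-1}, H), D_j = σ_j'(C_j(F_{j-1},W_j) + ι_j(b_j)), L(y,t) is the vector of partials ∂ℓ(y,t)/∂t_i, and * denotes Hilbert-space adjoint. -/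

import Mathlib

/-!
The weight `W_k` enters the network only at layer `k`, so `H ↦ F_{k+1+m}(W[k ↦ H])` is the map
`H ↦ σ_k(C_k(F_k, H) + ι_k(b_k))`, with derivative `S_k`, followed by the layers `k+1, …, k+m`,
with derivatives `T_{k+1}, …, T_{k+m}`. Passing from the derivative of `g ∘ f` to Riesz
representatives replaces the gradient `v` of `g` by `f'* v`. Inducting on `m` for an arbitrary
outer function `g` (peeling off the last layer, whose composite with `g` has gradient `T* v`) gives
the backpropagation formula.
-/

/-- Pointwise (Hadamard) product on `ℝ^I`. -/
def had {m : ℕ} (a c : EuclideanSpace ℝ (Fin m)) : EuclideanSpace ℝ (Fin m) :=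
  WithLp.toLp 2 (fun i => a i * c i)

variable (I : ℕ → ℕ) (J : ℕ → ℕ) (K : ℕ → ℕ)

/-- Activations of a network with general bilinear layers:
`F_0 x = x`, `F_{k+1} x = σ_k(C_k(F_k x, W_k) + ι_k(b_k))` (0-indexed). -/
noncomputable def genNetF
    (C : ∀ k : ℕ, EuclideanSpace ℝ (Fin (I k)) →ₗ[ℝ]
      EuclideanSpace ℝ (Fin (J k)) →ₗ[ℝ] EuclideanSpace ℝ (Fin (I (k + 1))))
    (ι : ∀ k : ℕ, EuclideanSpace ℝ (Fin (K k)) →ₗ[ℝ] EuclideanSpace ℝ (Fin (I (k + 1))))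
    (W : ∀ k : ℕ, EuclideanSpace ℝ (Fin (J k)))
    (b : ∀ k : ℕ, EuclideanSpace ℝ (Fin (K k)))
    (σ : ℕ → ℝ → ℝ) (x : EuclideanSpace ℝ (Fin (I 0))) :
    (k : ℕ) → EuclideanSpace ℝ (Fin (I k))
  | 0 => x
  | k + 1 => WithLp.toLp 2 (fun i => σ k ((C k (genNetF C ι W b σ x k) (W k) + ι k (b k)) i))

/-- The coordinatewise derivative vector `D_k = σ_k'(C_k(F_k, W_k) + ι_k(b_k))`. -/
noncomputable def genDvec
    (C : ∀ k : ℕ, EuclideanSpace ℝ (Fin (I k)) →ₗ[ℝ]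
      EuclideanSpace ℝ (Fin (J k)) →ₗ[ℝ] EuclideanSpace ℝ (Fin (I (k + 1))))
    (ι : ∀ k : ℕ, EuclideanSpace ℝ (Fin (K k)) →ₗ[ℝ] EuclideanSpace ℝ (Fin (I (k + 1))))
    (W : ∀ k : ℕ, EuclideanSpace ℝ (Fin (J k)))
    (b : ∀ k : ℕ, EuclideanSpace ℝ (Fin (K k)))
    (σ : ℕ → ℝ → ℝ) (x : EuclideanSpace ℝ (Fin (I 0))) (k : ℕ) :
    EuclideanSpace ℝ (Fin (I (k + 1))) :=
  WithLp.toLp 2 (fun i => deriv (σ k) ((C k (genNetF I J K C ι W b σ x k) (W k) + ι k (b k)) i))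

/-- The composition of adjoints `T_{k+1}* ∘ ⋯ ∘ T_{k+m}*` (identity for `m = 0`). -/
noncomputable def adjComp
    (T : ∀ j : ℕ, EuclideanSpace ℝ (Fin (I j)) →L[ℝ] EuclideanSpace ℝ (Fin (I (j + 1))))
    (k : ℕ) : (m : ℕ) →
      (EuclideanSpace ℝ (Fin (I (k + 1 + m))) →L[ℝ] EuclideanSpace ℝ (Fin (I (k + 1))))
  | 0 => ContinuousLinearMap.id ℝ _
  | m + 1 => (adjComp T k m).comp (ContinuousLinearMap.adjoint (T (k + 1 + m)))

open ContinuousLinearMap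

noncomputable def hadCLM {p : ℕ} (a : EuclideanSpace ℝ (Fin p)) :
    EuclideanSpace ℝ (Fin p) →L[ℝ] EuclideanSpace ℝ (Fin p) :=
  LinearMap.toContinuousLinearMap
    { toFun := had a
      map_add' := fun c d => by ext i; simp [had, mul_add]
      map_smul' := fun r c => by ext i; simp [had, mul_left_comm] }

@[simp] lemma hadCLM_apply {p : ℕ} (a c : EuclideanSpace ℝ (Fin p)) : hadCLM a c = had a c := rfl

lemma HasFDerivAt.map_coordwise {E : Type*} [NormedAddCommGroup E] [NormedSpace ℝ E] {p : ℕ}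
    {f : E → EuclideanSpace ℝ (Fin p)} {f' : E →L[ℝ] EuclideanSpace ℝ (Fin p)} {u : E}
    (hf : HasFDerivAt f f' u) {s : ℝ → ℝ} (hs : ∀ i, DifferentiableAt ℝ s (f u i)) :
    HasFDerivAt (fun v => WithLp.toLp 2 fun i => s (f v i))
      ((hadCLM (WithLp.toLp 2 fun i => deriv s (f u i))).comp f') u := by
  rw [← hasFDerivWithinAt_univ, hasFDerivWithinAt_piLp]
  intro i
  rw [hasFDerivWithinAt_univ]
  refine ((hs i).hasDerivAt.comp_hasFDerivAt u
    ((PiLp.hasFDerivAt_apply 2 (f u) i).comp u hf)).congr_fderiv ?_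
  ext w
  simp [had]

lemma HasFDerivAt.hasGradientAt_comp {𝕜 E F : Type*} [RCLike 𝕜]
    [NormedAddCommGroup E] [InnerProductSpace 𝕜 E] [CompleteSpace E]
    [NormedAddCommGroup F] [InnerProductSpace 𝕜 F] [CompleteSpace F]
    {g : F → 𝕜} {f : E → F} {v : F} {A : E →L[𝕜] F} {u : E}
    (hf : HasFDerivAt f A u) (hg : HasGradientAt g v (f u)) :
    HasGradientAt (g ∘ f) (adjoint A v) u := by
  rw [hasGradientAt_iff_hasFDerivAt] at hg ⊢
  refine (hg.comp u hf).congr_fderiv ?_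
  ext w
  simp [adjoint_inner_left]

section Network

variable {I J K}
  (C : ∀ k : ℕ, EuclideanSpace ℝ (Fin (I k)) →ₗ[ℝ]
    EuclideanSpace ℝ (Fin (J k)) →ₗ[ℝ] EuclideanSpace ℝ (Fin (I (k + 1))))
  (ι : ∀ k : ℕ, EuclideanSpace ℝ (Fin (K k)) →ₗ[ℝ] EuclideanSpace ℝ (Fin (I (k + 1))))
  (W : ∀ k : ℕ, EuclideanSpace ℝ (Fin (J k)))
  (b : ∀ k : ℕ, EuclideanSpace ℝ (Fin (K k)))
  (σ : ℕ → ℝ → ℝ) (x : EuclideanSpace ℝ (Fin (I 0)))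

lemma genNetF_update_of_le {k j : ℕ} (H : EuclideanSpace ℝ (Fin (J k))) (hj : j ≤ k) :
    genNetF I J K C ι (Function.update W k H) b σ x j = genNetF I J K C ι W b σ x j := by
  induction j with
  | zero => rfl
  | succ j ih =>
    rw [genNetF, genNetF, ih (by omega), Function.update_of_ne (by omega)]

lemma genNetF_succ_update_of_ne {k j : ℕ} (H : EuclideanSpace ℝ (Fin (J k))) (hj : j ≠ k) :
    genNetF I J K C ι (Function.update W k H) b σ x (j + 1) =
      WithLp.toLp 2 fun i => σ j
        ((C j (genNetF I J K C ι (Function.update W k H) b σ x j) (W j) + ι j (b j)) i) := by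
  rw [genNetF, Function.update_of_ne hj]

lemma hasFDerivAt_layer_input {j : ℕ} (hσ : Differentiable ℝ (σ j))
    {T : EuclideanSpace ℝ (Fin (I j)) →L[ℝ] EuclideanSpace ℝ (Fin (I (j + 1)))}
    (hT : ∀ h, T h = had (genDvec I J K C ι W b σ x j) (C j h (W j))) :
    HasFDerivAt (fun u => WithLp.toLp 2 fun i => σ j ((C j u (W j) + ι j (b j)) i)) T
      (genNetF I J K C ι W b σ x j) := by
  have hlin := (((C j).flip (W j)).toContinuousLinearMap.hasFDerivAt
    (x := genNetF I J K C ι W b σ x j)).add_const (ι j (b j))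
  refine (hlin.map_coordwise fun _ => hσ _).congr_fderiv ?_
  ext h i
  simp [hT, had, genDvec]

lemma hasFDerivAt_genNetF_succ_update {k : ℕ} (hσ : Differentiable ℝ (σ k))
    {S : EuclideanSpace ℝ (Fin (J k)) →L[ℝ] EuclideanSpace ℝ (Fin (I (k + 1)))}
    (hS : ∀ H, S H = had (genDvec I J K C ι W b σ x k) (C k (genNetF I J K C ι W b σ x k) H)) :
    HasFDerivAt (fun H => genNetF I J K C ι (Function.update W k H) b σ x (k + 1)) S (W k) := by
  have hlin := ((C k (genNetF I J K C ι W b σ x k)).toContinuousLinearMap.hasFDerivAt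
    (x := W k)).add_const (ι k (b k))
  have hF : (fun H => genNetF I J K C ι (Function.update W k H) b σ x (k + 1)) =
      fun H =>
        WithLp.toLp 2 fun i => σ k ((C k (genNetF I J K C ι W b σ x k) H + ι k (b k)) i) := by
    funext H
    rw [genNetF, genNetF_update_of_le C ι W b σ x H le_rfl, Function.update_self]
  rw [hF]
  refine (hlin.map_coordwise fun _ => hσ _).congr_fderiv ?_
  ext H i
  simp [hS, had, genDvec]

lemma hasGradientAt_comp_genNetF_update (hσ : ∀ j, Differentiable ℝ (σ j)) (k : ℕ)
    {T : ∀ j : ℕ, EuclideanSpace ℝ (Fin (I j)) →L[ℝ] EuclideanSpace ℝ (Fin (I (j + 1)))}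
    (hT : ∀ j h, T j h = had (genDvec I J K C ι W b σ x j) (C j h (W j)))
    {S : EuclideanSpace ℝ (Fin (J k)) →L[ℝ] EuclideanSpace ℝ (Fin (I (k + 1)))}
    (hS : ∀ H, S H = had (genDvec I J K C ι W b σ x k) (C k (genNetF I J K C ι W b σ x k) H))
    (m : ℕ) {g : EuclideanSpace ℝ (Fin (I (k + 1 + m))) → ℝ}
    {v : EuclideanSpace ℝ (Fin (I (k + 1 + m)))}
    (hg : HasGradientAt g v (genNetF I J K C ι W b σ x (k + 1 + m))) :
    HasGradientAt (fun H => g (genNetF I J K C ι (Function.update W k H) b σ x (k + 1 + m)))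
      (adjoint S (adjComp I T k m v)) (W k) := by
  induction m with
  | zero =>
    rw [← Function.update_eq_self k W] at hg
    exact (hasFDerivAt_genNetF_succ_update C ι W b σ x (hσ k) hS).hasGradientAt_comp hg
  | succ m ih =>
    have hlayer :=
      (hasFDerivAt_layer_input C ι W b σ x (hσ _) (hT (k + 1 + m))).hasGradientAt_comp hg
    refine (ih hlayer).congr_of_eventuallyEq (.of_forall fun H => ?_)
    exact congrArg g (genNetF_succ_update_of_ne C ι W b σ x H (j := k + 1 + m) (by omega))

end Network

/-- For a network with general bilinear layers and a differentiable loss, the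
Fréchet–Riesz gradient with respect to `W_k` is
`S_k* (T_{k+1}* ∘ ⋯ ∘ T_{n-1}* (L(y, F_n)))` with `n = k+1+m`, where
`T_j h = D_j ⊙ C_j(h, W_j)`, `S_k H = D_k ⊙ C_k(F_k, H)`,
`D_j = σ_j'(C_j(F_j, W_j) + ι_j(b_j))`, and `L(y, ·)` is the gradient of the loss
in its second argument. -/
theorem gen_nn_loss_weight_gradient
    (C : ∀ k : ℕ, EuclideanSpace ℝ (Fin (I k)) →ₗ[ℝ]
      EuclideanSpace ℝ (Fin (J k)) →ₗ[ℝ] EuclideanSpace ℝ (Fin (I (k + 1))))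
    (ι : ∀ k : ℕ, EuclideanSpace ℝ (Fin (K k)) →ₗ[ℝ] EuclideanSpace ℝ (Fin (I (k + 1))))
    (W : ∀ k : ℕ, EuclideanSpace ℝ (Fin (J k)))
    (b : ∀ k : ℕ, EuclideanSpace ℝ (Fin (K k)))
    (σ : ℕ → ℝ → ℝ) (hσ : ∀ j, Differentiable ℝ (σ j))
    (x : EuclideanSpace ℝ (Fin (I 0))) (k m : ℕ)
    (T : ∀ j : ℕ, EuclideanSpace ℝ (Fin (I j)) →L[ℝ] EuclideanSpace ℝ (Fin (I (j + 1))))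
    (hT : ∀ j (h : EuclideanSpace ℝ (Fin (I j))),
      T j h = had (genDvec I J K C ι W b σ x j) (C j h (W j)))
    (S : EuclideanSpace ℝ (Fin (J k)) →L[ℝ] EuclideanSpace ℝ (Fin (I (k + 1))))
    (hS : ∀ H : EuclideanSpace ℝ (Fin (J k)),
      S H = had (genDvec I J K C ι W b σ x k) (C k (genNetF I J K C ι W b σ x k) H))
    (ℓ : EuclideanSpace ℝ (Fin (I (k + 1 + m))) → EuclideanSpace ℝ (Fin (I (k + 1 + m))) → ℝ)
    (y : EuclideanSpace ℝ (Fin (I (k + 1 + m))))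
    (hℓ : DifferentiableAt ℝ (ℓ y) (genNetF I J K C ι W b σ x (k + 1 + m))) :
    HasGradientAt
      (fun H : EuclideanSpace ℝ (Fin (J k)) =>
        ℓ y (genNetF I J K C ι (Function.update W k H) b σ x (k + 1 + m)))
      (ContinuousLinearMap.adjoint S
        (adjComp I T k m (gradient (ℓ y) (genNetF I J K C ι W b σ x (k + 1 + m)))))
      (W k) := hasGradientAt_comp_genNetF_update C ι W b σ x hσ k hT hS m hℓ.hasGradientAt
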